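/- arXiv:1312.6005 — 4 statements merged into one kernel-verified Lean document; each statement's English description precedes it below -/
import Mathlib

section
/- Let K and L be convex bodies in ℝ^n, let M(K,L) = max_{z ∈ ℝ^n} vol(K ∩ (z − L)), and for θ ∈ [0,1] define the θ-convolution body K +_θ L = {x ∈ K + L : vol(K ∩ (x − L)) ≥ θ·M(K,L)}. Then K +_θ L is convex for every θ ∈ [0,1]. -/
/-!
For `a + b = 1` the convexity of `K` and `L` gives
`a • (K ∩ (x - L)) + b • (K ∩ (y - L)) ⊆ K ∩ (a • x + b • y - L)`, so by the multiplicative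
Brunn–Minkowski inequality `vol (a • A + b • B) ≥ vol A ^ a * vol B ^ b` the function
`x ↦ vol (K ∩ (x - L))` is log-concave, and superlevel sets of log-concave functions are convex.
Brunn–Minkowski is proved by induction on the dimension via Fubini and the one-dimensional
Prékopa–Leindler inequality; the latter follows, after normalising the suprema of the two
functions to `1`, from the one-dimensional Brunn–Minkowski inequality applied to superlevel sets
and the layer-cake formula.
-/

open MeasureTheory Pointwise ENNReal
open Set

namespace ENNReal

theorem min_le_rpow_mul_rpow {a b : ℝ} (ha : 0 ≤ a) (hb : 0 ≤ b) (hab : a + b = 1)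
    (x y : ℝ≥0∞) : min x y ≤ x ^ a * y ^ b :=
  calc min x y = min x y ^ a * min x y ^ b := by
        rw [← rpow_add_of_nonneg _ _ ha hb, hab, rpow_one]
    _ ≤ x ^ a * y ^ b := by gcongr <;> simp

theorem rpow_mul_rpow_le_add {a b : ℝ} (ha : 0 < a) (hb : 0 < b) (hab : a + b = 1)
    (x y : ℝ≥0∞) : x ^ a * y ^ b ≤ ENNReal.ofReal a * x + ENNReal.ofReal b * y := by
  have := young_inequality (x ^ a) (y ^ b) (Real.HolderConjugate.inv_inv ha hb hab)
  rwa [rpow_rpow_inv ha.ne', rpow_rpow_inv hb.ne', ofReal_inv_of_pos ha, ofReal_inv_of_pos hb,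
    div_eq_mul_inv, div_eq_mul_inv, inv_inv, inv_inv, mul_comm x, mul_comm y] at this

end ENNReal

namespace MeasureTheory

theorem lintegral_eq_lintegral_meas_ofReal_lt {α : Type*} [MeasurableSpace α] (μ : Measure α)
    {f : α → ℝ≥0∞} (hf : AEMeasurable f μ) :
    ∫⁻ x, f x ∂μ = ∫⁻ t in Ioi 0, μ {x | ENNReal.ofReal t < f x} := by
  by_cases htop : μ {x | f x = ∞} = 0
  · have hfin : ∀ᵐ x ∂μ, f x ≠ ∞ := by simpa [ae_iff] using htop
    calc ∫⁻ x, f x ∂μ = ∫⁻ x, ENNReal.ofReal (f x).toReal ∂μ :=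
          lintegral_congr_ae (hfin.mono fun x hx => (ofReal_toReal hx).symm)
      _ = ∫⁻ t in Ioi 0, μ {x | t < (f x).toReal} :=
          lintegral_eq_lintegral_meas_lt μ (ae_of_all _ fun _ => toReal_nonneg) hf.ennreal_toReal
      _ = ∫⁻ t in Ioi 0, μ {x | ENNReal.ofReal t < f x} :=
          setLIntegral_congr_fun measurableSet_Ioi fun t ht => measure_congr <|
            hfin.mono fun x hx => propext (ofReal_lt_iff_lt_toReal ht.le hx).symm
  · refine (lintegral_eq_top_of_measure_eq_top_ne_zero hf htop).trans (eq_top_iff.2 ?_).symm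
    calc ∞ = ∫⁻ _ in Ioi (0 : ℝ), μ {x | f x = ∞} := by simp [htop]
      _ ≤ ∫⁻ t in Ioi 0, μ {x | ENNReal.ofReal t < f x} :=
          lintegral_mono fun t => measure_mono fun x (hx : f x = ∞) => by simp [hx]

end MeasureTheory

namespace Real

theorem brunnMinkowski_of_isCompact {a b : ℝ} (ha : 0 ≤ a) (hb : 0 ≤ b) {S T : Set ℝ}
    (hS : IsCompact S) (hT : IsCompact T) (hS₀ : S.Nonempty) (hT₀ : T.Nonempty) :
    ENNReal.ofReal a * volume S + ENNReal.ofReal b * volume T ≤ volume (a • S + b • T) := by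
  -- `X` and `Y` are translates of `a • S` and `b • T` inside `a • S + b • T` meeting only at `c`
  set c := a * sSup S + b * sInf T
  set X := (b * sInf T) +ᵥ a • S
  set Y := (a * sSup S) +ᵥ b • T
  have hX : X ⊆ (a • S + b • T) ∩ Iic c := by
    rintro _ ⟨_, ⟨s, hs, rfl⟩, rfl⟩
    refine ⟨⟨a • s, smul_mem_smul_set hs, b • sInf T, smul_mem_smul_set (hT.sInf_mem hT₀),
      by simp [add_comm]⟩, ?_⟩
    have := le_csSup hS.bddAbove hs
    simp only [vadd_eq_add, smul_eq_mul, mem_Iic, c]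
    nlinarith
  have hY : Y ⊆ (a • S + b • T) ∩ Ici c := by
    rintro _ ⟨_, ⟨t, ht, rfl⟩, rfl⟩
    refine ⟨⟨a • sSup S, smul_mem_smul_set (hS.sSup_mem hS₀), b • t, smul_mem_smul_set ht,
      by simp⟩, ?_⟩
    have := csInf_le hT.bddBelow ht
    simp only [vadd_eq_add, smul_eq_mul, mem_Ici, c]
    nlinarith
  have hXY : X ∩ Y ⊆ {c} := by
    intro x hx
    exact le_antisymm (hX hx.1).2 (hY hx.2).2
  calc ENNReal.ofReal a * volume S + ENNReal.ofReal b * volume T = volume X + volume Y := by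
        simp [X, Y, measure_vadd, Measure.addHaar_smul, abs_of_nonneg ha, abs_of_nonneg hb]
    _ = volume (X ∪ Y) + volume (X ∩ Y) :=
        (measure_union_add_inter X ((hT.smul b).vadd _).measurableSet).symm
    _ ≤ volume (a • S + b • T) + 0 :=
        add_le_add (measure_mono (union_subset (hX.trans inter_subset_left)
          (hY.trans inter_subset_left))) (measure_mono_null hXY (measure_singleton c)).le
    _ = volume (a • S + b • T) := add_zero _

theorem brunnMinkowski {a b : ℝ} (ha : 0 ≤ a) (hb : 0 ≤ b) {S T : Set ℝ}
    (hS : MeasurableSet S) (hT : MeasurableSet T) (hS₀ : S.Nonempty) (hT₀ : T.Nonempty) :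
    ENNReal.ofReal a * volume S + ENNReal.ofReal b * volume T ≤ volume (a • S + b • T) := by
  obtain ⟨s₀, hs₀⟩ := hS₀
  obtain ⟨t₀, ht₀⟩ := hT₀
  rw [hS.measure_eq_iSup_isCompact, hT.measure_eq_iSup_isCompact]
  simp only [iSup_and', ENNReal.mul_iSup]
  refine ENNReal.biSup_add_biSup_le' ⟨∅, empty_subset _, isCompact_empty⟩
    ⟨∅, empty_subset _, isCompact_empty⟩ fun P ⟨hPS, hP⟩ Q ⟨hQT, hQ⟩ => ?_
  calc ENNReal.ofReal a * volume P + ENNReal.ofReal b * volume Q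
      ≤ ENNReal.ofReal a * volume (insert s₀ P) + ENNReal.ofReal b * volume (insert t₀ Q) := by
        gcongr <;> exact subset_insert _ _
    _ ≤ volume (a • insert s₀ P + b • insert t₀ Q) :=
        brunnMinkowski_of_isCompact ha hb (hP.insert s₀) (hQ.insert t₀)
          (insert_nonempty _ _) (insert_nonempty _ _)
    _ ≤ volume (a • S + b • T) := by
        gcongr
        exacts [insert_subset hs₀ hPS, insert_subset ht₀ hQT]

theorem add_lintegral_le_lintegral_of_min_le {a b : ℝ} (ha : 0 ≤ a) (hb : 0 ≤ b)
    {f g h : ℝ → ℝ≥0∞} (hf : Measurable f) (hg : Measurable g) (hh : AEMeasurable h)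
    (hfg : ⨆ r, f r = ⨆ s, g s) (hfgh : ∀ r s, min (f r) (g s) ≤ h (a * r + b * s)) :
    ENNReal.ofReal a * (∫⁻ r, f r) + ENNReal.ofReal b * ∫⁻ s, g s ≤ ∫⁻ t, h t := by
  have hlevel : ∀ u : ℝ, ENNReal.ofReal a * volume {r | ENNReal.ofReal u < f r} +
      ENNReal.ofReal b * volume {s | ENNReal.ofReal u < g s} ≤
        volume {t | ENNReal.ofReal u < h t} := by
    intro u
    by_cases hu : ENNReal.ofReal u < ⨆ r, f r
    · obtain ⟨r₀, hr₀⟩ := lt_iSup_iff.1 hu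
      obtain ⟨s₀, hs₀⟩ := lt_iSup_iff.1 (hfg ▸ hu)
      refine (brunnMinkowski ha hb (hf measurableSet_Ioi) (hg measurableSet_Ioi)
        ⟨r₀, hr₀⟩ ⟨s₀, hs₀⟩).trans (measure_mono ?_)
      rintro _ ⟨_, ⟨r, hr, rfl⟩, _, ⟨s, hs, rfl⟩, rfl⟩
      exact (lt_min hr hs).trans_le (hfgh r s)
    · have hf₀ : {r | ENNReal.ofReal u < f r} = ∅ :=
        eq_empty_of_forall_notMem fun r hr => hu (lt_of_lt_of_le hr (le_iSup f r))
      have hg₀ : {s | ENNReal.ofReal u < g s} = ∅ :=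
        eq_empty_of_forall_notMem fun s hs => hu (hfg ▸ lt_of_lt_of_le hs (le_iSup g s))
      simp [hf₀, hg₀]
  have hmeas : ∀ φ : ℝ → ℝ≥0∞, Measurable fun u : ℝ => volume {x | ENNReal.ofReal u < φ x} :=
    fun φ => Antitone.measurable fun u v huv =>
      measure_mono fun x hx => (ENNReal.ofReal_le_ofReal huv).trans_lt hx
  rw [lintegral_eq_lintegral_meas_ofReal_lt _ hf.aemeasurable,
    lintegral_eq_lintegral_meas_ofReal_lt _ hg.aemeasurable,
    lintegral_eq_lintegral_meas_ofReal_lt _ hh, ← lintegral_const_mul _ (hmeas f),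
    ← lintegral_const_mul _ (hmeas g), ← lintegral_add_left ((hmeas f).const_mul _)]
  exact lintegral_mono fun u => hlevel u

theorem prekopaLeindler {a b : ℝ} (ha : 0 < a) (hb : 0 < b) (hab : a + b = 1)
    {f g h : ℝ → ℝ≥0∞} (hf : Measurable f) (hg : Measurable g) (hh : AEMeasurable h)
    (hf_top : ⨆ r, f r ≠ ∞) (hg_top : ⨆ s, g s ≠ ∞)
    (hfgh : ∀ r s, f r ^ a * g s ^ b ≤ h (a * r + b * s)) :
    (∫⁻ r, f r) ^ a * (∫⁻ s, g s) ^ b ≤ ∫⁻ t, h t := by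
  set Mf := ⨆ r, f r
  set Mg := ⨆ s, g s
  rcases eq_or_ne Mf 0 with hMf | hMf
  · simp [ENNReal.iSup_eq_zero.1 hMf, ENNReal.zero_rpow_of_pos ha]
  rcases eq_or_ne Mg 0 with hMg | hMg
  · simp [ENNReal.iSup_eq_zero.1 hMg, ENNReal.zero_rpow_of_pos hb]
  set c := Mf⁻¹ ^ a * Mg⁻¹ ^ b
  have hc₀ : c ≠ 0 := mul_ne_zero (by simp [hf_top, ha.le]) (by simp [hg_top, hb.le])
  have hc_top : c ≠ ∞ := mul_ne_top (rpow_ne_top_of_nonneg ha.le (inv_ne_top.2 hMf))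
    (rpow_ne_top_of_nonneg hb.le (inv_ne_top.2 hMg))
  have hscale : ∀ x y : ℝ≥0∞, (Mf⁻¹ * x) ^ a * (Mg⁻¹ * y) ^ b = c * (x ^ a * y ^ b) := by
    intro x y
    rw [mul_rpow_of_nonneg _ _ ha.le, mul_rpow_of_nonneg _ _ hb.le]
    ring
  -- with both suprema scaled to `1`, the additive form applies
  have hadd := add_lintegral_le_lintegral_of_min_le ha.le hb.le
    (hf.const_mul Mf⁻¹) (hg.const_mul Mg⁻¹) (hh.const_mul c)
    (by simp only [← ENNReal.mul_iSup]
        exact (ENNReal.inv_mul_cancel hMf hf_top).trans (ENNReal.inv_mul_cancel hMg hg_top).symm)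
    fun r s => (min_le_rpow_mul_rpow ha.le hb.le hab _ _).trans <|
      (hscale _ _).trans_le (by gcongr; exact hfgh r s)
  rw [lintegral_const_mul _ hf, lintegral_const_mul _ hg, lintegral_const_mul'' _ hh] at hadd
  rw [← ENNReal.mul_le_mul_iff_right hc₀ hc_top, ← hscale]
  exact (rpow_mul_rpow_le_add ha hb hab _ _).trans hadd

end Real

theorem IsCompact.preimage_prodMk {X Y : Type*} [TopologicalSpace X] [T1Space X]
    [TopologicalSpace Y] {A : Set (X × Y)} (hA : IsCompact A) (x : X) :
    IsCompact (Prod.mk x ⁻¹' A) :=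
  (Topology.IsClosedEmbedding.of_continuous_injective_isClosedMap (by fun_prop)
    (Prod.mk_right_injective x) (isClosedMap_prodMk_left x)).isCompact_preimage hA

theorem smul_preimage_prodMk_add_smul_preimage_prodMk_subset {R X Y : Type*} [Semiring R]
    [AddCommMonoid X] [Module R X] [AddCommMonoid Y] [Module R Y] (a b : R)
    (A B : Set (X × Y)) (x y : X) :
    a • (Prod.mk x ⁻¹' A) + b • (Prod.mk y ⁻¹' B) ⊆
      Prod.mk (a • x + b • y) ⁻¹' (a • A + b • B) := by
  rintro _ ⟨_, ⟨u, hu, rfl⟩, _, ⟨v, hv, rfl⟩, rfl⟩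
  exact ⟨a • (x, u), smul_mem_smul_set hu, b • (y, v), smul_mem_smul_set hv, rfl⟩

def HasMulBrunnMinkowski {E : Type*} [AddCommGroup E] [Module ℝ E] [MeasurableSpace E]
    [TopologicalSpace E] (μ : Measure E) : Prop :=
  ∀ ⦃a b : ℝ⦄, 0 < a → 0 < b → a + b = 1 → ∀ ⦃A B : Set E⦄, IsCompact A → IsCompact B →
    μ A ^ a * μ B ^ b ≤ μ (a • A + b • B)

namespace HasMulBrunnMinkowski

variable {E F : Type*} [AddCommGroup E] [Module ℝ E] [MeasurableSpace E] [TopologicalSpace E]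
  [AddCommGroup F] [Module ℝ F] [MeasurableSpace F] [TopologicalSpace F]

theorem of_subsingleton [Subsingleton E] (μ : Measure E) [IsProbabilityMeasure μ] :
    HasMulBrunnMinkowski μ := by
  intro a b ha hb _ A B _ _
  rcases A.eq_empty_or_nonempty with rfl | ⟨x, hx⟩
  · simp [zero_rpow_of_pos ha]
  rcases B.eq_empty_or_nonempty with rfl | ⟨y, hy⟩
  · simp [zero_rpow_of_pos hb]
  have hC : a • A + b • B = univ := (Subsingleton.eq_univ_of_nonempty
    ⟨a • x + b • y, add_mem_add (smul_mem_smul_set hx) (smul_mem_smul_set hy)⟩)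
  calc μ A ^ a * μ B ^ b ≤ 1 ^ a * 1 ^ b := by gcongr <;> exact prob_le_one
    _ = μ (a • A + b • B) := by simp [hC]

theorem of_measurePreserving {μ : Measure E} {ν : Measure F} (h : HasMulBrunnMinkowski μ)
    (e : F ≃ᵐ E) (he : MeasurePreserving e ν μ) (he_cont : Continuous e)
    (he_lin : IsLinearMap ℝ e) : HasMulBrunnMinkowski ν := by
  intro a b ha hb hab A B hA hB
  have hvol : ∀ S, ν S = μ (e '' S) := fun S => by
    rw [← he.map_eq, e.map_apply, e.preimage_image]
  let ℓ := he_lin.mk' e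
  have himage : e '' (a • A + b • B) = a • e '' A + b • e '' B := by
    change ℓ '' (a • A + b • B) = a • ℓ '' A + b • ℓ '' B
    rw [image_add, image_smul_set, image_smul_set]
  rw [hvol, hvol, hvol, himage]
  exact h ha hb hab (hA.image he_cont) (hB.image he_cont)

theorem prod [T2Space E] [ContinuousAdd E] [ContinuousConstSMul ℝ E] [OpensMeasurableSpace E]
    {μ : Measure E} [SFinite μ] [IsFiniteMeasureOnCompacts μ] (h : HasMulBrunnMinkowski μ) :
    HasMulBrunnMinkowski ((volume : Measure ℝ).prod μ) := by
  intro a b ha hb hab A B hA hB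
  have hC : IsCompact (a • A + b • B) := (hA.smul a).add (hB.smul b)
  have hsup : ∀ {S : Set (ℝ × E)}, IsCompact S → ⨆ x, μ (Prod.mk x ⁻¹' S) ≠ ∞ := fun hS =>
    ne_top_of_le_ne_top (hS.image continuous_snd).measure_lt_top.ne <|
      iSup_le fun x => measure_mono fun y hy => ⟨(x, y), hy, rfl⟩
  rw [Measure.prod_apply hA.measurableSet, Measure.prod_apply hB.measurableSet,
    Measure.prod_apply hC.measurableSet]
  refine Real.prekopaLeindler ha hb hab (measurable_measure_prodMk_left hA.measurableSet)
    (measurable_measure_prodMk_left hB.measurableSet)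
    (measurable_measure_prodMk_left hC.measurableSet).aemeasurable (hsup hA) (hsup hB)
    fun r s => ?_
  exact (h ha hb hab (hA.preimage_prodMk r) (hB.preimage_prodMk s)).trans <|
    measure_mono (smul_preimage_prodMk_add_smul_preimage_prodMk_subset a b A B r s)

end HasMulBrunnMinkowski

theorem hasMulBrunnMinkowski_volume_pi :
    ∀ k : ℕ, HasMulBrunnMinkowski (volume : Measure (Fin k → ℝ))
  | 0 =>
    haveI : IsProbabilityMeasure (volume : Measure (Fin 0 → ℝ)) := ⟨by simp [volume_pi]⟩
    .of_subsingleton _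
  | k + 1 =>
    (hasMulBrunnMinkowski_volume_pi k).prod.of_measurePreserving
      (MeasurableEquiv.piFinSuccAbove (fun _ => ℝ) 0)
      (volume_preserving_piFinSuccAbove (fun _ => ℝ) 0)
      ((continuous_apply 0).prodMk (continuous_pi fun _ => continuous_apply _))
      ⟨fun _ _ => rfl, fun _ _ => rfl⟩

theorem hasMulBrunnMinkowski_volume_euclideanSpace (n : ℕ) :
    HasMulBrunnMinkowski (volume : Measure (EuclideanSpace ℝ (Fin n))) :=
  (hasMulBrunnMinkowski_volume_pi n).of_measurePreserving
    (MeasurableEquiv.toLp 2 (Fin n → ℝ)).symm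
    (EuclideanSpace.volume_preserving_symm_measurableEquiv_toLp _) (PiLp.continuous_ofLp 2 _)
    ⟨fun _ _ => rfl, fun _ _ => rfl⟩

theorem convex_setOf_le_of_rpow_mul_rpow_le {E : Type*} [AddCommGroup E] [Module ℝ E]
    {φ : E → ℝ≥0∞} (hφ : ∀ x y (a b : ℝ), 0 < a → 0 < b → a + b = 1 →
      φ x ^ a * φ y ^ b ≤ φ (a • x + b • y)) (c : ℝ≥0∞) :
    Convex ℝ {x | c ≤ φ x} := by
  intro x hx y hy a b ha hb hab
  rcases ha.eq_or_lt with rfl | ha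
  · simpa [show b = 1 by linarith] using hy
  rcases hb.eq_or_lt with rfl | hb
  · simpa [show a = 1 by linarith] using hx
  calc c = c ^ a * c ^ b := by rw [← rpow_add_of_nonneg _ _ ha.le hb.le, hab, rpow_one]
    _ ≤ φ x ^ a * φ y ^ b := by gcongr <;> assumption
    _ ≤ φ (a • x + b • y) := hφ x y a b ha hb hab

theorem Convex.smul_inter_image_sub_add_smul_inter_image_sub_subset {E : Type*}
    [AddCommGroup E] [Module ℝ E] {K L : Set E} (hK : Convex ℝ K) (hL : Convex ℝ L)
    {a b : ℝ} (ha : 0 ≤ a) (hb : 0 ≤ b) (hab : a + b = 1) (x y : E) :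
    a • (K ∩ (fun z => x - z) '' L) + b • (K ∩ (fun z => y - z) '' L) ⊆
      K ∩ (fun z => (a • x + b • y) - z) '' L := by
  rintro _ ⟨_, ⟨u, ⟨huK, l, hl, rfl⟩, rfl⟩, _, ⟨v, ⟨hvK, m, hm, rfl⟩, rfl⟩, rfl⟩
  refine ⟨hK huK hvK ha hb hab, a • l + b • m, hL hl hm ha hb hab, ?_⟩
  simp only [smul_sub]
  abel

theorem volume_inter_image_sub_rpow_mul_rpow_le {n : ℕ} {K L : Set (EuclideanSpace ℝ (Fin n))}
    (hK : Convex ℝ K) (hKc : IsCompact K) (hL : Convex ℝ L) (hLc : IsCompact L)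
    (x y : EuclideanSpace ℝ (Fin n)) {a b : ℝ} (ha : 0 < a) (hb : 0 < b) (hab : a + b = 1) :
    volume (K ∩ (fun z => x - z) '' L) ^ a * volume (K ∩ (fun z => y - z) '' L) ^ b ≤
      volume (K ∩ (fun z => (a • x + b • y) - z) '' L) := by
  have hcpt : ∀ w, IsCompact (K ∩ (fun z => w - z) '' L) := fun w =>
    hKc.inter_right (hLc.image (continuous_sub_left w)).isClosed
  exact (hasMulBrunnMinkowski_volume_euclideanSpace n ha hb hab (hcpt x) (hcpt y)).trans
    (measure_mono (hK.smul_inter_image_sub_add_smul_inter_image_sub_subset hL ha.le hb.le hab x y))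

theorem theta_convolution_body_convex_general {n : ℕ}
    (K L : Set (EuclideanSpace ℝ (Fin n)))
    (hK : Convex ℝ K) (hKc : IsCompact K)
    (hL : Convex ℝ L) (hLc : IsCompact L)
    (θ : ℝ) :
    Convex ℝ {x ∈ K + L |
      ENNReal.ofReal θ *
          (⨆ z : EuclideanSpace ℝ (Fin n), volume (K ∩ ((fun y => z - y) '' L))) ≤
        volume (K ∩ ((fun y => x - y) '' L))} :=
  (hK.add hL).inter <| convex_setOf_le_of_rpow_mul_rpow_le
    (fun x y _ _ => volume_inter_image_sub_rpow_mul_rpow_le hK hKc hL hLc x y) _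

theorem theta_convolution_body_convex {n : ℕ} (hn : 0 < n)
    (K L : Set (EuclideanSpace ℝ (Fin n)))
    (hK : Convex ℝ K) (hKc : IsCompact K) (hKi : (interior K).Nonempty)
    (hL : Convex ℝ L) (hLc : IsCompact L) (hLi : (interior L).Nonempty)
    (θ : ℝ) (hθ : θ ∈ Set.Icc (0:ℝ) 1) :
    Convex ℝ {x ∈ K + L |
      ENNReal.ofReal θ *
          (⨆ z : EuclideanSpace ℝ (Fin n), volume (K ∩ ((fun y => z - y) '' L))) ≤
        volume (K ∩ ((fun y => x - y) '' L))} :=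
  theta_convolution_body_convex_general K L hK hKc hL hLc θ
end

section
/- Let K and L be convex bodies in ℝ^n with M(K,L) = max_z vol(K ∩ (z − L)) attained at z = 0 (i.e., vol(K ∩ (−L)) = M(K,L)). Let θ₁, θ₂, λ₁, λ₂ ∈ [0,1] with λ₁ + λ₂ ≤ 1, and set θ = (1 − λ₁(1 − θ₁^{1/n}) − λ₂(1 − θ₂^{1/n}))^n. Then λ₁(K +_{θ₁} L) + λ₂(K +_{θ₂} L) ⊆ K +_θ L, where K +_θ L = {x ∈ K + L : vol(K ∩ (x − L)) ≥ θ·M(K,L)}. -/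
open MeasureTheory Pointwise ENNReal

/-- The `θ`-convolution body of `K` and `L`, normalized so that the maximum of
`z ↦ vol(K ∩ (z − L))` is `vol(K ∩ (−L))`. -/
noncomputable def thetaConv {n : ℕ} (K L : Set (EuclideanSpace ℝ (Fin n))) (θ : ℝ) :
    Set (EuclideanSpace ℝ (Fin n)) :=
  {x ∈ K + L |
    ENNReal.ofReal θ * volume (K ∩ -L) ≤ volume (K ∩ ((fun y => x - y) '' L))}

/-!
For convex `K` and `L`, a convex combination of the slices `K ∩ (x - L)` and `K ∩ (y - L)` lies
in the slice at the same convex combination of `x` and `y`. By the Brunn–Minkowski inequality,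
`x ↦ vol(K ∩ (x - L))^(1/n)` is therefore concave on `K + L`. Evaluating this concavity at `x`,
`y` and `0` with weights `λ₁`, `λ₂`, `1 - λ₁ - λ₂` gives the claim, because the slice at `0` is
`K ∩ (-L)`, of volume `M(K, L)`; it has positive volume, so `0 ∈ K + L`.

Brunn–Minkowski follows from the Prékopa–Leindler inequality applied to indicator functions.
Prékopa–Leindler is proved on `ℝ` by truncating and rescaling `f` and `g` to supremum `1`: their
superlevel sets at a common height below `1` are then nonempty, so the one-dimensional inequality
`|A| + |B| ≤ |A + B|` applies to them, and the layer-cake formula integrates over the height. It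
passes to products by Tonelli, and to every Haar measure on a finite-dimensional space through a
linear isomorphism with `ℝᵈ` and uniqueness of Haar measure up to a scalar.
-/

open Set Module

theorem ENNReal.rpow_one_sub_mul_rpow_le_add {t : ℝ} (ht₀ : 0 < t) (ht₁ : t < 1)
    (a b : ℝ≥0∞) :
    a ^ (1 - t) * b ^ t ≤ ENNReal.ofReal (1 - t) * a + ENNReal.ofReal t * b := by
  have h₁ : 0 < 1 - t := by linarith
  have := ENNReal.young_inequality (a ^ (1 - t)) (b ^ t)
    (Real.HolderConjugate.one_sub_inv_inv ht₀ ht₁)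
  rwa [← ENNReal.rpow_mul, ← ENNReal.rpow_mul, mul_inv_cancel₀ h₁.ne', mul_inv_cancel₀ ht₀.ne',
    ENNReal.rpow_one, ENNReal.rpow_one, div_eq_mul_inv, div_eq_mul_inv,
    ENNReal.ofReal_inv_of_pos h₁, ENNReal.ofReal_inv_of_pos ht₀, inv_inv, inv_inv,
    mul_comm a, mul_comm b] at this

theorem Real.volume_add_volume_le_of_isCompact {A B : Set ℝ} (hA : IsCompact A)
    (hB : IsCompact B) (hA₀ : A.Nonempty) (hB₀ : B.Nonempty) :
    volume A + volume B ≤ volume (A + B) := by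
  -- `A + inf B` and `sup A + B` lie in `A + B` and meet only in `sup A + inf B`.
  set a := sSup A
  set b := sInf B
  have hab : (b +ᵥ A) ∩ (a +ᵥ B) ⊆ {a + b} := by
    rintro _ ⟨⟨x, hx, rfl⟩, ⟨y, hy, hxy⟩⟩
    have := le_csSup hA.bddAbove hx
    have := csInf_le hB.bddBelow hy
    simp only [vadd_eq_add, mem_singleton_iff] at hxy ⊢
    linarith
  have hsub : (b +ᵥ A) ∪ (a +ᵥ B) ⊆ A + B := by
    rintro _ (⟨x, hx, rfl⟩ | ⟨y, hy, rfl⟩)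
    · simpa only [vadd_eq_add, add_comm b] using add_mem_add hx (hB.sInf_mem hB₀)
    · exact add_mem_add (hA.sSup_mem hA₀) hy
  calc volume A + volume B = volume (b +ᵥ A) + volume (a +ᵥ B) := by
        rw [measure_vadd, measure_vadd]
    _ = volume ((b +ᵥ A) ∪ (a +ᵥ B)) + volume ((b +ᵥ A) ∩ (a +ᵥ B)) :=
        (measure_union_add_inter _ (hB.vadd a).measurableSet).symm
    _ ≤ volume (A + B) + 0 := by
        gcongr
        exact (measure_mono hab).trans (measure_singleton _).le
    _ = volume (A + B) := add_zero _

theorem Real.volume_add_volume_le {A B : Set ℝ} (hA : MeasurableSet A) (hB : MeasurableSet B)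
    (hA₀ : A.Nonempty) (hB₀ : B.Nonempty) : volume A + volume B ≤ volume (A + B) := by
  obtain ⟨a, ha⟩ := hA₀
  obtain ⟨b, hb⟩ := hB₀
  rw [hA.measure_eq_iSup_isCompact, hB.measure_eq_iSup_isCompact]
  simp only [iSup_and']
  refine ENNReal.biSup_add_biSup_le' ⟨∅, empty_subset _, isCompact_empty⟩
    ⟨∅, empty_subset _, isCompact_empty⟩ fun K ⟨hKA, hK⟩ C ⟨hCB, hC⟩ => ?_
  calc volume K + volume C ≤ volume (insert a K) + volume (insert b C) := by
        gcongr <;> exact subset_insert _ _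
    _ ≤ volume (insert a K + insert b C) :=
        Real.volume_add_volume_le_of_isCompact (hK.insert a) (hC.insert b)
          (insert_nonempty _ _) (insert_nonempty _ _)
    _ ≤ volume (A + B) :=
        measure_mono (add_subset_add (insert_subset ha hKA) (insert_subset hb hCB))

theorem lintegral_eq_lintegral_meas_ofReal_lt {α : Type*} [MeasurableSpace α] (μ : Measure α)
    {f : α → ℝ≥0∞} (hf : Measurable f) (hf_fin : ∀ x, f x ≠ ∞) :
    ∫⁻ x, f x ∂μ = ∫⁻ s in Ioi 0, μ {x | ENNReal.ofReal s < f x} := by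
  calc ∫⁻ x, f x ∂μ = ∫⁻ x, ENNReal.ofReal (f x).toReal ∂μ := by
        simp only [ENNReal.ofReal_toReal (hf_fin _)]
    _ = ∫⁻ s in Ioi 0, μ {x | s < (f x).toReal} :=
        lintegral_eq_lintegral_meas_lt μ (.of_forall fun _ => ENNReal.toReal_nonneg)
          hf.ennreal_toReal.aemeasurable
    _ = ∫⁻ s in Ioi 0, μ {x | ENNReal.ofReal s < f x} :=
        setLIntegral_congr_fun measurableSet_Ioi fun s hs => by
          simp only [ENNReal.ofReal_lt_iff_lt_toReal (le_of_lt hs) (hf_fin _)]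

theorem lintegral_eq_iSup_lintegral_min_natCast {α : Type*} [MeasurableSpace α]
    (μ : Measure α) {f : α → ℝ≥0∞} (hf : Measurable f) :
    ∫⁻ x, f x ∂μ = ⨆ N : ℕ, ∫⁻ x, min (f x) N ∂μ := by
  rw [← lintegral_iSup (fun N => hf.min measurable_const)
    fun N M hNM x => min_le_min_left _ (by exact_mod_cast hNM)]
  simp only [← inf_iSup_eq, ENNReal.iSup_natCast, inf_top_eq]

def PrekopaLeindler {E : Type*} [AddCommGroup E] [Module ℝ E] [MeasurableSpace E]
    (μ : Measure E) (t : ℝ) : Prop :=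
  ∀ f g h : E → ℝ≥0∞, Measurable f → Measurable g → Measurable h →
    (∀ x y, f x ^ (1 - t) * g y ^ t ≤ h ((1 - t) • x + t • y)) →
    (∫⁻ x, f x ∂μ) ^ (1 - t) * (∫⁻ x, g x ∂μ) ^ t ≤ ∫⁻ x, h x ∂μ

theorem smul_setOf_lt_add_smul_setOf_lt_subset {E : Type*} [AddCommGroup E] [Module ℝ E]
    {t : ℝ} (ht₀ : 0 < t) (ht₁ : t < 1) {f g h : E → ℝ≥0∞}
    (hfgh : ∀ x y, f x ^ (1 - t) * g y ^ t ≤ h ((1 - t) • x + t • y)) (s : ℝ≥0∞) :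
    (1 - t) • {x | s < f x} + t • {y | s < g y} ⊆ {z | s < h z} := by
  rintro _ ⟨_, ⟨x, hx, rfl⟩, _, ⟨y, hy, rfl⟩, rfl⟩
  calc s = s ^ (1 - t) * s ^ t := by
        rw [← ENNReal.rpow_add_of_nonneg _ _ (by linarith) ht₀.le, sub_add_cancel,
          ENNReal.rpow_one]
    _ < f x ^ (1 - t) * g y ^ t :=
        ENNReal.mul_lt_mul (ENNReal.rpow_lt_rpow hx (by linarith)) (ENNReal.rpow_lt_rpow hy ht₀)
    _ ≤ h ((1 - t) • x + t • y) := hfgh x y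

section PrekopaLeindlerReal

variable {t : ℝ} (ht₀ : 0 < t) (ht₁ : t < 1) {f g h : ℝ → ℝ≥0∞}
  (hf : Measurable f) (hg : Measurable g) (hh : Measurable h)
  (hfgh : ∀ x y, f x ^ (1 - t) * g y ^ t ≤ h ((1 - t) • x + t • y))
include ht₀ ht₁ hf hg hfgh

theorem weighted_volume_setOf_lt_le (hf₁ : ⨆ x, f x = 1) (hg₁ : ⨆ x, g x = 1) (s : ℝ) :
    ENNReal.ofReal (1 - t) * volume {x | ENNReal.ofReal s < f x} +
      ENNReal.ofReal t * volume {y | ENNReal.ofReal s < g y} ≤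
    volume {z | ENNReal.ofReal s < h z} := by
  rcases lt_or_ge s 1 with hs | hs
  · have hne : ∀ φ : ℝ → ℝ≥0∞, ⨆ x, φ x = 1 → {x | ENNReal.ofReal s < φ x}.Nonempty :=
      fun φ hφ => by
        obtain ⟨x, hx⟩ := lt_iSup_iff.mp (hφ ▸ ENNReal.ofReal_lt_one.mpr hs)
        exact ⟨x, hx⟩
    have hmeas : ∀ φ : ℝ → ℝ≥0∞, Measurable φ → MeasurableSet {x | ENNReal.ofReal s < φ x} :=
      fun φ hφ => measurableSet_lt measurable_const hφ
    calc _ = volume ((1 - t) • {x | ENNReal.ofReal s < f x}) +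
          volume (t • {y | ENNReal.ofReal s < g y}) := by
          simp only [Measure.addHaar_smul_of_nonneg _ (sub_nonneg.mpr ht₁.le),
            Measure.addHaar_smul_of_nonneg _ ht₀.le, finrank_self, pow_one]
      _ ≤ volume ((1 - t) • {x | ENNReal.ofReal s < f x} +
          t • {y | ENNReal.ofReal s < g y}) :=
          Real.volume_add_volume_le ((hmeas f hf).const_smul₀ _) ((hmeas g hg).const_smul₀ _)
            (hne f hf₁).smul_set (hne g hg₁).smul_set
      _ ≤ _ := measure_mono (smul_setOf_lt_add_smul_setOf_lt_subset ht₀ ht₁ hfgh _)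
  · have hempty : ∀ φ : ℝ → ℝ≥0∞, ⨆ x, φ x = 1 → {x | ENNReal.ofReal s < φ x} = ∅ :=
      fun φ hφ => eq_empty_of_forall_notMem fun x hx =>
        (hφ ▸ le_iSup φ x : φ x ≤ 1).not_gt ((ENNReal.one_le_ofReal.mpr hs).trans_lt hx)
    simp [hempty f hf₁, hempty g hg₁]

include hh

theorem lintegral_add_le_of_iSup_eq_one (hf₁ : ⨆ x, f x = 1) (hg₁ : ⨆ x, g x = 1)
    (hh_fin : ∀ x, h x ≠ ∞) :
    ENNReal.ofReal (1 - t) * (∫⁻ x, f x) + ENNReal.ofReal t * ∫⁻ x, g x ≤ ∫⁻ x, h x := by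
  have hfin : ∀ φ : ℝ → ℝ≥0∞, ⨆ x, φ x = 1 → ∀ x, φ x ≠ ∞ := fun φ hφ x =>
    ne_top_of_le_ne_top one_ne_top (hφ ▸ le_iSup φ x)
  have hh_level : Measurable fun s : ℝ => volume {z | ENNReal.ofReal s < h z} :=
    Antitone.measurable fun s s' hss' => measure_mono fun z hz =>
      (ENNReal.ofReal_le_ofReal hss').trans_lt hz
  rw [lintegral_eq_lintegral_meas_ofReal_lt volume hf (hfin f hf₁),
    lintegral_eq_lintegral_meas_ofReal_lt volume hg (hfin g hg₁),
    lintegral_eq_lintegral_meas_ofReal_lt volume hh hh_fin,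
    ← lintegral_const_mul' _ _ ofReal_ne_top, ← lintegral_const_mul' _ _ ofReal_ne_top]
  exact (le_lintegral_add _ _).trans (setLIntegral_mono hh_level fun s _ =>
    weighted_volume_setOf_lt_le ht₀ ht₁ hf hg hfgh hf₁ hg₁ s)

theorem lintegral_min_rpow_mul_le_of_le_iSup {r q : ℝ≥0∞} (hr₀ : r ≠ 0) (hr : r ≠ ∞)
    (hrf : r ≤ ⨆ x, f x) (hq₀ : q ≠ 0) (hq : q ≠ ∞) (hqg : q ≤ ⨆ x, g x) :
    (∫⁻ x, min (f x) r) ^ (1 - t) * (∫⁻ x, min (g x) q) ^ t ≤ ∫⁻ x, h x := by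
  have h₁ : 0 < 1 - t := by linarith
  set c := r ^ (1 - t) * q ^ t
  have hc₀ : c ≠ 0 := mul_ne_zero (ENNReal.rpow_pos (pos_iff_ne_zero.mpr hr₀) hr).ne'
    (ENNReal.rpow_pos (pos_iff_ne_zero.mpr hq₀) hq).ne'
  have hc : c ≠ ∞ := mul_ne_top (ENNReal.rpow_ne_top_of_nonneg h₁.le hr)
    (ENNReal.rpow_ne_top_of_nonneg ht₀.le hq)
  have hscale : ∀ X Y : ℝ≥0∞,
      (r⁻¹ * X) ^ (1 - t) * (q⁻¹ * Y) ^ t = c⁻¹ * (X ^ (1 - t) * Y ^ t) := by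
    intro X Y
    rw [ENNReal.mul_rpow_of_nonneg _ _ h₁.le, ENNReal.mul_rpow_of_nonneg _ _ ht₀.le,
      ENNReal.inv_rpow, ENNReal.inv_rpow,
      ENNReal.mul_inv (.inr (rpow_ne_top_of_nonneg ht₀.le hq))
        (.inl (rpow_ne_top_of_nonneg h₁.le hr))]
    ring
  have hnormalize : ∀ (φ : ℝ → ℝ≥0∞) (a : ℝ≥0∞), a ≠ 0 → a ≠ ∞ → a ≤ ⨆ x, φ x →
      ⨆ x, a⁻¹ * min (φ x) a = 1 := fun φ a ha₀ ha hle => by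
    rw [← ENNReal.mul_iSup, ← iSup_inf_eq, inf_eq_right.mpr hle, ENNReal.inv_mul_cancel ha₀ ha]
  have hnormalized := lintegral_add_le_of_iSup_eq_one ht₀ ht₁
    ((hf.min measurable_const).const_mul r⁻¹) ((hg.min measurable_const).const_mul q⁻¹)
    ((hh.min measurable_const).const_mul c⁻¹)
    (fun x y => by
      rw [hscale]
      gcongr
      exact le_min ((mul_le_mul' (ENNReal.rpow_le_rpow (min_le_left _ _) h₁.le)
          (ENNReal.rpow_le_rpow (min_le_left _ _) ht₀.le)).trans (hfgh x y))
        (mul_le_mul' (ENNReal.rpow_le_rpow (min_le_right _ _) h₁.le)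
          (ENNReal.rpow_le_rpow (min_le_right _ _) ht₀.le)))
    (hnormalize f r hr₀ hr hrf) (hnormalize g q hq₀ hq hqg)
    (fun z => mul_ne_top (inv_ne_top.mpr hc₀) (ne_top_of_le_ne_top hc (min_le_right _ _)))
  simp only [lintegral_const_mul' _ _ (inv_ne_top.mpr hr₀),
    lintegral_const_mul' _ _ (inv_ne_top.mpr hq₀),
    lintegral_const_mul' _ _ (inv_ne_top.mpr hc₀)] at hnormalized
  rw [← ENNReal.mul_le_mul_iff_right (ENNReal.inv_ne_zero.mpr hc) (inv_ne_top.mpr hc₀),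
    ← hscale]
  calc _ ≤ _ := ENNReal.rpow_one_sub_mul_rpow_le_add ht₀ ht₁ _ _
    _ ≤ _ := hnormalized
    _ ≤ c⁻¹ * ∫⁻ x, h x := by gcongr; exact min_le_left _ _

theorem lintegral_min_rpow_mul_le {r q : ℝ≥0∞} (hr : r ≠ ∞) (hq : q ≠ ∞) :
    (∫⁻ x, min (f x) r) ^ (1 - t) * (∫⁻ x, min (g x) q) ^ t ≤ ∫⁻ x, h x := by
  have htrunc : ∀ (φ : ℝ → ℝ≥0∞) (a : ℝ≥0∞) x,
      min (φ x) a = min (φ x) (min a (⨆ y, φ y)) :=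
    fun φ a x => by rw [min_comm a, ← min_assoc, min_eq_left (le_iSup φ x)]
  simp only [htrunc f r, htrunc g q]
  have hzero : ∀ (φ : ℝ → ℝ≥0∞) (p : ℝ), 0 < p → (∫⁻ x, min (φ x) 0) ^ p = 0 :=
    fun φ p hp => by simp [ENNReal.zero_rpow_of_pos hp]
  rcases eq_or_ne (min r (⨆ y, f y)) 0 with hr₀ | hr₀
  · rw [hr₀, hzero f _ (by linarith), zero_mul]
    exact zero_le
  rcases eq_or_ne (min q (⨆ y, g y)) 0 with hq₀ | hq₀
  · rw [hq₀, hzero g _ ht₀, mul_zero]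
    exact zero_le
  exact lintegral_min_rpow_mul_le_of_le_iSup ht₀ ht₁ hf hg hh hfgh hr₀
    (ne_top_of_le_ne_top hr (min_le_left _ _)) (min_le_right _ _) hq₀
    (ne_top_of_le_ne_top hq (min_le_left _ _)) (min_le_right _ _)

end PrekopaLeindlerReal

theorem prekopaLeindler_volume_real {t : ℝ} (ht₀ : 0 < t) (ht₁ : t < 1) :
    PrekopaLeindler (volume : Measure ℝ) t := by
  intro f g h hf hg hh hfgh
  have hrpow_iSup : ∀ p : ℝ, 0 < p → ∀ a : ℕ → ℝ≥0∞, (⨆ n, a n) ^ p = ⨆ n, a n ^ p :=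
    fun p hp a => (ENNReal.orderIsoRpow p hp).map_iSup a
  rw [lintegral_eq_iSup_lintegral_min_natCast _ hf, lintegral_eq_iSup_lintegral_min_natCast _ hg,
    hrpow_iSup _ (by linarith), hrpow_iSup _ ht₀, ENNReal.iSup_mul]
  refine iSup_le fun N => ?_
  rw [ENNReal.mul_iSup]
  exact iSup_le fun M => lintegral_min_rpow_mul_le ht₀ ht₁ hf hg hh hfgh (natCast_ne_top N)
    (natCast_ne_top M)

namespace PrekopaLeindler

variable {E F : Type*} [AddCommGroup E] [Module ℝ E] [MeasurableSpace E]
  [AddCommGroup F] [Module ℝ F] [MeasurableSpace F] {t : ℝ}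

theorem dirac_zero : PrekopaLeindler (Measure.dirac (0 : E)) t := by
  intro f g h hf hg hh hfgh
  simpa [lintegral_dirac' _ hf, lintegral_dirac' _ hg, lintegral_dirac' _ hh] using hfgh 0 0

theorem prod {μ : Measure E} {ν : Measure F} [SFinite ν] (hμ : PrekopaLeindler μ t)
    (hν : PrekopaLeindler ν t) : PrekopaLeindler (μ.prod ν) t := by
  intro f g h hf hg hh hfgh
  rw [lintegral_prod _ hf.aemeasurable, lintegral_prod _ hg.aemeasurable,
    lintegral_prod _ hh.aemeasurable]
  refine hμ _ _ _ hf.lintegral_prod_right' hg.lintegral_prod_right' hh.lintegral_prod_right'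
    fun x y => hν _ _ _ (hf.comp measurable_prodMk_left) (hg.comp measurable_prodMk_left)
      (hh.comp measurable_prodMk_left) fun v w => hfgh (x, v) (y, w)

theorem of_measurePreserving {μ : Measure E} {ν : Measure F} (hμ : PrekopaLeindler μ t)
    (e : E →ₗ[ℝ] F) (he : MeasurePreserving e μ ν) : PrekopaLeindler ν t := by
  intro f g h hf hg hh hfgh
  rw [← he.lintegral_comp hf, ← he.lintegral_comp hg, ← he.lintegral_comp hh]
  exact hμ _ _ _ (hf.comp he.measurable) (hg.comp he.measurable) (hh.comp he.measurable)
    fun x y => by simpa using hfgh (e x) (e y)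

theorem smul {μ : Measure E} (hμ : PrekopaLeindler μ t) (ht₀ : 0 ≤ t) (ht₁ : t ≤ 1)
    (c : ℝ≥0∞) : PrekopaLeindler (c • μ) t := by
  intro f g h hf hg hh hfgh
  simp only [lintegral_smul_measure, smul_eq_mul]
  calc (c * ∫⁻ x, f x ∂μ) ^ (1 - t) * (c * ∫⁻ x, g x ∂μ) ^ t
      = c * ((∫⁻ x, f x ∂μ) ^ (1 - t) * (∫⁻ x, g x ∂μ) ^ t) := by
        rw [ENNReal.mul_rpow_of_nonneg _ _ (sub_nonneg.mpr ht₁),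
          ENNReal.mul_rpow_of_nonneg _ _ ht₀, mul_mul_mul_comm,
          ← ENNReal.rpow_add_of_nonneg _ _ (sub_nonneg.mpr ht₁) ht₀, sub_add_cancel,
          ENNReal.rpow_one]
    _ ≤ c * ∫⁻ x, h x ∂μ := by gcongr; exact hμ f g h hf hg hh hfgh

end PrekopaLeindler

theorem prekopaLeindler_volume_pi {t : ℝ} (ht₀ : 0 < t) (ht₁ : t < 1) :
    ∀ n : ℕ, PrekopaLeindler (volume : Measure (Fin n → ℝ)) t
  | 0 => by
    rw [volume_pi, Measure.pi_of_empty _ 0]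
    exact PrekopaLeindler.dirac_zero
  | n + 1 => by
    let e : ℝ × (Fin n → ℝ) →ₗ[ℝ] (Fin (n + 1) → ℝ) :=
      { toFun := (MeasurableEquiv.piFinSuccAbove (fun _ => ℝ) 0).symm
        map_add' := fun p q => by
          ext i; induction i using Fin.cases <;> simp [MeasurableEquiv.piFinSuccAbove]
        map_smul' := fun c p => by
          ext i; induction i using Fin.cases <;> simp [MeasurableEquiv.piFinSuccAbove] }
    exact ((prekopaLeindler_volume_real ht₀ ht₁).prod
      (prekopaLeindler_volume_pi ht₀ ht₁ n)).of_measurePreserving e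
        (volume_preserving_piFinSuccAbove (fun _ => ℝ) 0).symm

theorem measure_le_measure_add_left {G : Type*} [AddGroup G] [MeasurableSpace G]
    [MeasurableAdd G] (μ : Measure G) [μ.IsAddLeftInvariant] {A : Set G} (B : Set G)
    (hA : A.Nonempty) : μ B ≤ μ (A + B) := by
  obtain ⟨a, ha⟩ := hA
  exact (measure_vadd μ a B).symm.le.trans (measure_mono (vadd_set_subset_add ha))

section AddHaar

variable {E : Type*} [NormedAddCommGroup E] [NormedSpace ℝ E] [FiniteDimensional ℝ E]
  [MeasurableSpace E] [BorelSpace E] (μ : Measure E) [μ.IsAddHaarMeasure]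

theorem prekopaLeindler_addHaar {t : ℝ} (ht₀ : 0 < t) (ht₁ : t < 1) :
    PrekopaLeindler μ t := by
  let e : (Fin (finrank ℝ E) → ℝ) ≃L[ℝ] E := .ofFinrankEq (by simp)
  have hmap : PrekopaLeindler (volume.map e) t :=
    (prekopaLeindler_volume_pi ht₀ ht₁ _).of_measurePreserving e.toLinearMap
      (e.continuous.measurable.measurePreserving _)
  rw [μ.isAddLeftInvariant_eq_smul (volume.map e)]
  exact hmap.smul ht₀.le ht₁.le _

theorem addHaar_rpow_mul_rpow_le {t : ℝ} (ht₀ : 0 < t) (ht₁ : t < 1) {A B : Set E}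
    (hA : IsCompact A) (hB : IsCompact B) :
    μ A ^ (1 - t) * μ B ^ t ≤ μ ((1 - t) • A + t • B) := by
  have hC : IsCompact ((1 - t) • A + t • B) := (hA.smul _).add (hB.smul _)
  have := prekopaLeindler_addHaar μ ht₀ ht₁ (A.indicator 1) (B.indicator 1)
    (((1 - t) • A + t • B).indicator 1) (measurable_one.indicator hA.measurableSet)
    (measurable_one.indicator hB.measurableSet) (measurable_one.indicator hC.measurableSet)
    fun x y => by
      by_cases hx : x ∈ A
      · by_cases hy : y ∈ B
        · simp [hx, hy, add_mem_add (smul_mem_smul_set hx) (smul_mem_smul_set hy)]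
        · simp [hy, ENNReal.zero_rpow_of_pos ht₀]
      · simp [hx, ENNReal.zero_rpow_of_pos (sub_pos.mpr ht₁)]
  rwa [lintegral_indicator_one hA.measurableSet, lintegral_indicator_one hB.measurableSet,
    lintegral_indicator_one hC.measurableSet] at this

theorem addHaar_smul_toReal_rpow_inv_eq_one (hd : 0 < finrank ℝ E) {S : Set E}
    (hS : 0 < (μ S).toReal) : μ (((μ S).toReal ^ (finrank ℝ E : ℝ)⁻¹)⁻¹ • S) = 1 := by
  obtain ⟨hS₀, hS_fin⟩ := ENNReal.toReal_pos_iff.mp hS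
  rw [Measure.addHaar_smul_of_nonneg _ (by positivity), inv_pow,
    Real.rpow_inv_natCast_pow hS.le hd.ne', ENNReal.ofReal_inv_of_pos hS,
    ENNReal.ofReal_toReal hS_fin.ne, ENNReal.inv_mul_cancel hS₀.ne' hS_fin.ne]

theorem addHaar_toReal_rpow_add_le (hd : 0 < finrank ℝ E) {A B : Set E} (hA : IsCompact A)
    (hB : IsCompact B) (hA₀ : A.Nonempty) (hB₀ : B.Nonempty) :
    (μ A).toReal ^ (finrank ℝ E : ℝ)⁻¹ + (μ B).toReal ^ (finrank ℝ E : ℝ)⁻¹ ≤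
      (μ (A + B)).toReal ^ (finrank ℝ E : ℝ)⁻¹ := by
  set d := finrank ℝ E
  have hp : 0 < (d : ℝ)⁻¹ := by positivity
  have hfin : μ (A + B) ≠ ∞ := (hA.add hB).measure_lt_top.ne
  rcases (ENNReal.toReal_nonneg (a := μ A)).eq_or_lt with hA' | hA'
  · rw [← hA', Real.zero_rpow hp.ne', zero_add]
    exact Real.rpow_le_rpow ENNReal.toReal_nonneg
      (ENNReal.toReal_mono hfin (measure_le_measure_add_left μ B hA₀)) hp.le
  rcases (ENNReal.toReal_nonneg (a := μ B)).eq_or_lt with hB' | hB'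
  · rw [← hB', Real.zero_rpow hp.ne', add_zero, add_comm A]
    exact Real.rpow_le_rpow ENNReal.toReal_nonneg
      (ENNReal.toReal_mono (add_comm A B ▸ hfin) (measure_le_measure_add_left μ A hB₀)) hp.le
  set a := (μ A).toReal ^ (d : ℝ)⁻¹
  set b := (μ B).toReal ^ (d : ℝ)⁻¹
  have ha : 0 < a := Real.rpow_pos_of_pos hA' _
  have hb : 0 < b := Real.rpow_pos_of_pos hB' _
  -- Rescale `A` and `B` to unit volume; `A + B` is then `a + b` times a convex combination.
  set t := b / (a + b)
  have hsum : A + B = (a + b) • ((1 - t) • a⁻¹ • A + t • b⁻¹ • B) := by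
    have hta : (a + b) * (1 - t) * a⁻¹ = 1 := by simp only [t]; field_simp; ring
    have htb : (a + b) * t * b⁻¹ = 1 := by simp only [t]; field_simp
    rw [smul_add, smul_smul, smul_smul, smul_smul, smul_smul, hta, htb, one_smul, one_smul]
  have hBM := addHaar_rpow_mul_rpow_le μ (t := t) (div_pos hb (add_pos ha hb))
    ((div_lt_one (add_pos ha hb)).mpr (lt_add_of_pos_left b ha)) (hA.smul a⁻¹) (hB.smul b⁻¹)
  rw [addHaar_smul_toReal_rpow_inv_eq_one μ hd hA', addHaar_smul_toReal_rpow_inv_eq_one μ hd hB',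
    ENNReal.one_rpow, ENNReal.one_rpow, one_mul] at hBM
  have hvol : ENNReal.ofReal ((a + b) ^ d) ≤ μ (A + B) := by
    rw [hsum, Measure.addHaar_smul_of_nonneg _ (by positivity)]
    exact le_mul_of_one_le_right zero_le hBM
  calc a + b = ((a + b) ^ d) ^ (d : ℝ)⁻¹ :=
        (Real.pow_rpow_inv_natCast (by positivity) hd.ne').symm
    _ ≤ _ := Real.rpow_le_rpow (by positivity)
        ((ENNReal.ofReal_le_iff_le_toReal hfin).mp hvol) hp.le

end AddHaar

section ThreePoints

variable {E : Type*} [AddCommGroup E] [Module ℝ E] {s : Set E} {x y z : E} {a b c : ℝ}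

theorem Convex.smul_add_smul_add_smul_mem (hs : Convex ℝ s) (hx : x ∈ s) (hy : y ∈ s)
    (hz : z ∈ s) (ha : 0 ≤ a) (hb : 0 ≤ b) (hc : 0 ≤ c) (habc : a + b + c = 1) :
    a • x + b • y + c • z ∈ s := by
  simpa [Fin.sum_univ_three] using hs.sum_mem (t := Finset.univ) (w := ![a, b, c])
    (z := ![x, y, z]) (by simp [Fin.forall_fin_succ, ha, hb, hc])
    (by simp [Fin.sum_univ_three, habc]) (by simp [Fin.forall_fin_succ, hx, hy, hz])

theorem ConcaveOn.mul_add_mul_add_mul_le {φ : E → ℝ} (hφ : ConcaveOn ℝ s φ) (hx : x ∈ s)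
    (hy : y ∈ s) (hz : z ∈ s) (ha : 0 ≤ a) (hb : 0 ≤ b) (hc : 0 ≤ c) (habc : a + b + c = 1) :
    a * φ x + b * φ y + c * φ z ≤ φ (a • x + b • y + c • z) := by
  simpa [Fin.sum_univ_three] using hφ.le_map_sum (t := Finset.univ) (w := ![a, b, c])
    (p := ![x, y, z]) (by simp [Fin.forall_fin_succ, ha, hb, hc])
    (by simp [Fin.sum_univ_three, habc]) (by simp [Fin.forall_fin_succ, hx, hy, hz])

end ThreePoints

theorem Convex.smul_inter_sub_image_add_smul_subset {E : Type*} [AddCommGroup E] [Module ℝ E]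
    {K L : Set E} (hK : Convex ℝ K) (hL : Convex ℝ L) {a b : ℝ} (ha : 0 ≤ a) (hb : 0 ≤ b)
    (hab : a + b = 1) (x y : E) :
    a • (K ∩ (x - ·) '' L) + b • (K ∩ (y - ·) '' L) ⊆ K ∩ (a • x + b • y - ·) '' L := by
  rintro _ ⟨_, ⟨_, ⟨hu, l, hl, rfl⟩, rfl⟩, _, ⟨_, ⟨hv, m, hm, rfl⟩, rfl⟩, rfl⟩
  refine ⟨hK hu hv ha hb hab, a • l + b • m, hL hl hm ha hb hab, ?_⟩
  simp only [smul_sub]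
  abel

theorem exists_pos_measure_inter_sub_image {E : Type*} [AddCommGroup E] [TopologicalSpace E]
    [IsTopologicalAddGroup E] [MeasurableSpace E] (μ : Measure E) [μ.IsOpenPosMeasure]
    {K L : Set E} (hK : (interior K).Nonempty) (hL : (interior L).Nonempty) :
    ∃ z, 0 < μ (K ∩ (z - ·) '' L) := by
  obtain ⟨k, hk⟩ := hK
  obtain ⟨l, hl⟩ := hL
  have hopen : IsOpen (interior K ∩ (k + l - ·) '' interior L) :=
    isOpen_interior.inter ((Homeomorph.subLeft (k + l)).isOpenMap _ isOpen_interior)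
  exact ⟨k + l, (hopen.measure_pos μ ⟨k, hk, l, hl, add_sub_cancel_right k l⟩).trans_le
    (measure_mono (inter_subset_inter interior_subset (image_mono interior_subset)))⟩

theorem concaveOn_measure_inter_sub_image_rpow {E : Type*} [NormedAddCommGroup E]
    [NormedSpace ℝ E] [FiniteDimensional ℝ E] [MeasurableSpace E] [BorelSpace E]
    (μ : Measure E) [μ.IsAddHaarMeasure] (hd : 0 < finrank ℝ E) {K L : Set E}
    (hK : Convex ℝ K) (hKc : IsCompact K) (hL : Convex ℝ L) (hLc : IsCompact L) :
    ConcaveOn ℝ (K + L) fun x => (μ (K ∩ (x - ·) '' L)).toReal ^ (finrank ℝ E : ℝ)⁻¹ := by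
  set d := finrank ℝ E
  have hcompact : ∀ z, IsCompact (K ∩ (z - ·) '' L) := fun z =>
    hKc.inter_right (hLc.image (continuous_sub_left z)).isClosed
  have hnonempty : ∀ z ∈ K + L, (K ∩ (z - ·) '' L).Nonempty := by
    rintro _ ⟨k, hk, l, hl, rfl⟩
    exact ⟨k, hk, l, hl, add_sub_cancel_right k l⟩
  have hroot_smul : ∀ {c : ℝ}, 0 ≤ c → ∀ S : Set E,
      (μ (c • S)).toReal ^ (d : ℝ)⁻¹ = c * (μ S).toReal ^ (d : ℝ)⁻¹ := fun hc S => by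
    rw [Measure.addHaar_smul_of_nonneg _ hc, ENNReal.toReal_mul,
      ENNReal.toReal_ofReal (by positivity), Real.mul_rpow (by positivity) ENNReal.toReal_nonneg,
      Real.pow_rpow_inv_natCast hc hd.ne']
  refine ⟨hK.add hL, fun x hx y hy a b ha hb hab => ?_⟩
  simp only [smul_eq_mul, ← hroot_smul ha, ← hroot_smul hb]
  calc _ ≤ (μ (a • (K ∩ (x - ·) '' L) + b • (K ∩ (y - ·) '' L))).toReal ^ (d : ℝ)⁻¹ :=
        addHaar_toReal_rpow_add_le μ hd ((hcompact x).smul a) ((hcompact y).smul b)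
          (hnonempty x hx).smul_set (hnonempty y hy).smul_set
    _ ≤ _ := Real.rpow_le_rpow ENNReal.toReal_nonneg (ENNReal.toReal_mono
        (hcompact _).measure_lt_top.ne
        (measure_mono (hK.smul_inter_sub_image_add_smul_subset hL ha hb hab x y))) (by positivity)

theorem mem_thetaConv_iff {n : ℕ} (hn : 0 < n) {K L : Set (EuclideanSpace ℝ (Fin n))}
    (hKc : IsCompact K) {θ : ℝ} (hθ : 0 ≤ θ) {x : EuclideanSpace ℝ (Fin n)} :
    x ∈ thetaConv K L θ ↔ x ∈ K + L ∧
      θ ^ (n : ℝ)⁻¹ * (volume (K ∩ -L)).toReal ^ (n : ℝ)⁻¹ ≤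
        (volume (K ∩ (x - ·) '' L)).toReal ^ (n : ℝ)⁻¹ := by
  have hfin : ∀ S ⊆ K, volume S ≠ ∞ := fun S hS =>
    ((measure_mono hS).trans_lt hKc.measure_lt_top).ne
  refine and_congr_right fun _ => ?_
  rw [← Real.mul_rpow hθ ENNReal.toReal_nonneg,
    Real.rpow_le_rpow_iff (by positivity) ENNReal.toReal_nonneg (by positivity),
    ← ENNReal.ofReal_le_iff_le_toReal (hfin _ inter_subset_left), ENNReal.ofReal_mul hθ,
    ENNReal.ofReal_toReal (hfin _ inter_subset_left)]

theorem convolution_bodies_convex_combination {n : ℕ} (hn : 0 < n)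
    (K L : Set (EuclideanSpace ℝ (Fin n)))
    (hK : Convex ℝ K) (hKc : IsCompact K) (hKi : (interior K).Nonempty)
    (hL : Convex ℝ L) (hLc : IsCompact L) (hLi : (interior L).Nonempty)
    (hM : ∀ z : EuclideanSpace ℝ (Fin n),
      volume (K ∩ ((fun y => z - y) '' L)) ≤ volume (K ∩ -L))
    (θ₁ θ₂ l₁ l₂ : ℝ) (hθ₁ : θ₁ ∈ Set.Icc (0:ℝ) 1) (hθ₂ : θ₂ ∈ Set.Icc (0:ℝ) 1)
    (hl₁ : 0 ≤ l₁) (hl₂ : 0 ≤ l₂) (hl : l₁ + l₂ ≤ 1) :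
    l₁ • thetaConv K L θ₁ + l₂ • thetaConv K L θ₂ ⊆
      thetaConv K L
        ((1 - l₁ * (1 - θ₁ ^ ((n:ℝ)⁻¹)) - l₂ * (1 - θ₂ ^ ((n:ℝ)⁻¹))) ^ n) := by
  set φ := fun x => (volume (K ∩ (x - ·) '' L)).toReal ^ (n : ℝ)⁻¹
  have hφ : ConcaveOn ℝ (K + L) φ := by
    simpa [φ] using
      concaveOn_measure_inter_sub_image_rpow volume (by simpa using hn) hK hKc hL hLc
  have hφ₀ : φ 0 = (volume (K ∩ -L)).toReal ^ (n : ℝ)⁻¹ := by simp [φ]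
  obtain ⟨z, hz⟩ := exists_pos_measure_inter_sub_image volume hKi hLi
  obtain ⟨w, hwK, hwL⟩ := nonempty_of_measure_ne_zero (hz.trans_le (hM z)).ne'
  have h0 : (0 : EuclideanSpace ℝ (Fin n)) ∈ K + L := ⟨w, hwK, -w, hwL, add_neg_cancel w⟩
  have hl₃ : 0 ≤ 1 - l₁ - l₂ := by linarith
  have hl_sum : l₁ + l₂ + (1 - l₁ - l₂) = 1 := by ring
  have hc : 0 ≤ 1 - l₁ * (1 - θ₁ ^ (n : ℝ)⁻¹) - l₂ * (1 - θ₂ ^ (n : ℝ)⁻¹) := by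
    have := Real.rpow_nonneg hθ₁.1 (n : ℝ)⁻¹
    have := Real.rpow_nonneg hθ₂.1 (n : ℝ)⁻¹
    nlinarith
  rintro _ ⟨_, ⟨x, hx, rfl⟩, _, ⟨y, hy, rfl⟩, rfl⟩
  rw [mem_thetaConv_iff hn hKc hθ₁.1] at hx
  rw [mem_thetaConv_iff hn hKc hθ₂.1] at hy
  rw [mem_thetaConv_iff hn hKc (pow_nonneg hc n), Real.pow_rpow_inv_natCast hc hn.ne']
  constructor
  · simpa using (hK.add hL).smul_add_smul_add_smul_mem hx.1 hy.1 h0 hl₁ hl₂ hl₃ hl_sum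
  calc _ = l₁ * (θ₁ ^ (n : ℝ)⁻¹ * (volume (K ∩ -L)).toReal ^ (n : ℝ)⁻¹) +
        l₂ * (θ₂ ^ (n : ℝ)⁻¹ * (volume (K ∩ -L)).toReal ^ (n : ℝ)⁻¹) +
        (1 - l₁ - l₂) * φ 0 := by rw [hφ₀]; ring
    _ ≤ l₁ * φ x + l₂ * φ y + (1 - l₁ - l₂) * φ 0 := by gcongr; exacts [hx.2, hy.2]
    _ ≤ φ (l₁ • x + l₂ • y + (1 - l₁ - l₂) • 0) :=
        hφ.mul_add_mul_add_mul_le hx.1 hy.1 h0 hl₁ hl₂ hl₃ hl_sum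
    _ = φ (l₁ • x + l₂ • y) := by rw [smul_zero, add_zero]
end

section
/- Let K = conv{0, e₁, …, e_n} ⊆ ℝ^n be the standard simplex. Then the difference body satisfies K − K = {x ∈ ℝ^n : |Σᵢ xᵢ| + Σᵢ |xᵢ| ≤ 2}. -/
/-!
Writing `x = x⁺ - x⁻`, the left-hand side of the inequality is
`|P - N| + (P + N) = 2 max(P, N)` with `P = ∑ xᵢ⁺`, `N = ∑ xᵢ⁻`, so the inequality says
`P ≤ 1` and `N ≤ 1`, i.e. `x⁺, x⁻ ∈ K`. Conversely if `x = a - b` with `a, b ∈ K` then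
`x⁺ ≤ a` and `x⁻ ≤ b` coordinatewise. The simplex `K` itself is described by `y ≥ 0, ∑ yᵢ ≤ 1`
since it is the projection of the standard simplex in one dimension more.
-/

open Pointwise Set

def cornerSimplex (ι : Type*) [Fintype ι] : Set (ι → ℝ) := {y | 0 ≤ y ∧ ∑ i, y i ≤ 1}

variable {ι : Type*} [Fintype ι]

theorem image_funLeft_some_stdSimplex :
    LinearMap.funLeft ℝ ℝ (some : ι → Option ι) '' stdSimplex ℝ (Option ι) = cornerSimplex ι := by
  ext y
  simp only [mem_image, stdSimplex, cornerSimplex, mem_ofPred_eq, Fintype.sum_option]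
  constructor
  · rintro ⟨w, ⟨hw0, hw1⟩, rfl⟩
    exact ⟨fun i => hw0 (some i), by simp only [LinearMap.funLeft_apply]; linarith [hw0 none]⟩
  · rintro ⟨hy0, hy1⟩
    refine ⟨fun o => o.elim (1 - ∑ i, y i) y, ⟨?_, by simp⟩, rfl⟩
    rintro (_ | i)
    · simpa using hy1
    · exact hy0 i

theorem convexHull_insert_zero_range_single [DecidableEq ι] :
    convexHull ℝ (insert 0 (range fun i : ι => Pi.single i (1 : ℝ))) = cornerSimplex ι := by
  have hnone : LinearMap.funLeft ℝ ℝ some (Pi.single (none : Option ι) (1 : ℝ)) = 0 := by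
    ext i; simp [LinearMap.funLeft_apply]
  have hsome (j : ι) : LinearMap.funLeft ℝ ℝ some (Pi.single (some j) (1 : ℝ)) = Pi.single j 1 := by
    ext i; simp [LinearMap.funLeft_apply, Pi.single_apply]
  rw [← image_funLeft_some_stdSimplex, ← convexHull_rangle_single_eq_stdSimplex,
    LinearMap.image_convexHull, ← range_comp, Option.range_eq]
  simp only [Function.comp_def, hnone, hsome]

theorem abs_sum_add_sum_abs (x : ι → ℝ) :
    |∑ i, x i| + ∑ i, |x i| = 2 * max (∑ i, (x i)⁺) (∑ i, (x i)⁻) := by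
  have hsum : ∑ i, x i = ∑ i, (x i)⁺ - ∑ i, (x i)⁻ := by
    simp only [← Finset.sum_sub_distrib, posPart_sub_negPart]
  have habs : ∑ i, |x i| = ∑ i, (x i)⁺ + ∑ i, (x i)⁻ := by
    simp only [← Finset.sum_add_distrib, posPart_add_negPart]
  rw [hsum, habs, two_mul, ← two_nsmul, two_nsmul_sup_eq_add_add_abs_sub, abs_sub_comm]
  ring

theorem mem_cornerSimplex_sub_iff (x : ι → ℝ) :
    x ∈ cornerSimplex ι - cornerSimplex ι ↔ ∑ i, (x i)⁺ ≤ 1 ∧ ∑ i, (x i)⁻ ≤ 1 := by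
  constructor
  · rintro ⟨a, ⟨ha0, ha1⟩, b, ⟨hb0, hb1⟩, rfl⟩
    refine ⟨(Finset.sum_le_sum fun i _ => ?_).trans ha1,
      (Finset.sum_le_sum fun i _ => ?_).trans hb1⟩
    · exact sup_le (by simpa using hb0 i) (ha0 i)
    · exact sup_le (by simpa using ha0 i) (hb0 i)
  · rintro ⟨hpos, hneg⟩
    exact ⟨x⁺, ⟨posPart_nonneg x, hpos⟩, x⁻, ⟨negPart_nonneg x, hneg⟩, posPart_sub_negPart x⟩

theorem difference_body_of_simplex_general {n : ℕ}
    (K : Set (Fin n → ℝ))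
    (hK : K = convexHull ℝ (insert 0 (Set.range fun i : Fin n => Pi.single i (1:ℝ)))) :
    K - K = {x : Fin n → ℝ | |∑ i, x i| + ∑ i, |x i| ≤ 2} := by
  rw [hK, convexHull_insert_zero_range_single]
  ext x
  rw [mem_cornerSimplex_sub_iff, mem_ofPred_eq, abs_sum_add_sum_abs, ← max_le_iff]
  exact (mul_le_iff_le_one_right two_pos).symm

theorem difference_body_of_simplex {n : ℕ} (hn : 0 < n)
    (K : Set (Fin n → ℝ))
    (hK : K = convexHull ℝ (insert 0 (Set.range fun i : Fin n => Pi.single i (1:ℝ)))) :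
    K - K = {x : Fin n → ℝ | |∑ i, x i| + ∑ i, |x i| ≤ 2} :=
  difference_body_of_simplex_general K hK
end

section
/- Let K and L be convex bodies in ℝ^n with vol(K ∩ (−L)) = M(K,L) = max_z vol(K ∩ (z − L)), and suppose the limit C(K,L) = lim_{θ→1⁻} (K +_θ L)/(1 − θ^{1/n}) exists as a convex body (equivalently, the increasing family (K +_θ L)/(1 − θ^{1/n}) has union with closure C(K,L)). Then vol(C(K,L)) ≥ binom(2n, n) · vol(K)·vol(L)/M(K,L). -/
/-! Put `g x = vol (K ∩ (x - L))` and `M = vol (K ∩ -L) = max g`. Fubini gives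
`∫ g = vol K * vol L`, and the layer-cake formula gives `∫ g = M * ∫₀¹ vol {g > θ M} dθ`.
The superlevel set `{g > θ M}` lies in `K +_θ L`, whose dilate by `(1 - θ^(1/n))⁻¹` lies in `C`,
so its volume is at most `(1 - θ^(1/n))^n * vol C`. Finally, substituting `θ = s^n` turns
`∫₀¹ (1 - θ^(1/n))^n dθ` into `n * B(n, n + 1) = binom(2n, n)⁻¹`. -/

open MeasureTheory Pointwise ENNReal

open Set
open scoped Nat

theorem integral_pow_mul_one_sub_pow (m k : ℕ) :
    ∫ x in (0:ℝ)..1, x ^ m * (1 - x) ^ k = (m ! * k ! : ℝ) / (m + k + 1)! := by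
  have hbeta := Complex.Gamma_mul_Gamma_eq_betaIntegral (s := m + 1) (t := k + 1)
    (by simpa using m.cast_add_one_pos) (by simpa using k.cast_add_one_pos)
  have hB : Complex.betaIntegral (m + 1) (k + 1) = ∫ x in (0:ℝ)..1, x ^ m * (1 - x) ^ k := by
    rw [Complex.betaIntegral, ← intervalIntegral.integral_ofReal]
    push_cast
    simp only [add_sub_cancel_right, Complex.cpow_natCast]
  have hsum : (m + 1 : ℂ) + (k + 1) = ((m + k + 1 : ℕ) : ℂ) + 1 := by push_cast; ring
  rw [hsum, hB] at hbeta
  simp only [Complex.Gamma_nat_eq_factorial] at hbeta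
  rw [_root_.eq_div_iff (by positivity), mul_comm]
  exact_mod_cast hbeta.symm

theorem integral_one_sub_rpow_inv_pow {n : ℕ} (hn : 0 < n) :
    ∫ θ in (0:ℝ)..1, (1 - θ ^ (n⁻¹ : ℝ)) ^ n = ((2 * n).choose n : ℝ)⁻¹ := by
  have hsubst := intervalIntegral.integral_comp_mul_deriv (a := 0) (b := 1)
    (f := fun s : ℝ => s ^ n) (g := fun θ => (1 - θ ^ (n⁻¹ : ℝ)) ^ n)
    (fun s _ => hasDerivAt_pow n s) (by fun_prop) (by fun_prop (disch := positivity))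
  simp only [Function.comp_def, one_pow, zero_pow hn.ne'] at hsubst
  have hroot : ∀ s ∈ uIcc (0:ℝ) 1, (1 - (s ^ n) ^ (n⁻¹ : ℝ)) ^ n * (n * s ^ (n - 1))
      = n * (s ^ (n - 1) * (1 - s) ^ n) := fun s hs => by
    rw [Real.pow_rpow_inv_natCast (by simpa using hs.1) hn.ne']
    ring
  have hfac : ((2 * n).choose n : ℝ) * n ! * n ! = (2 * n)! := by
    rw [two_mul]
    exact_mod_cast Nat.add_choose_mul_factorial_mul_factorial n n
  have hpred : (n : ℝ) * (n - 1)! = n ! := by exact_mod_cast Nat.mul_factorial_pred hn.ne'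
  rw [← hsubst, intervalIntegral.integral_congr hroot, intervalIntegral.integral_const_mul,
    integral_pow_mul_one_sub_pow, show n - 1 + n + 1 = 2 * n by omega, ← hfac,
    ← mul_div_assoc, ← mul_assoc, hpred]
  field_simp

theorem lintegral_ofReal_one_sub_rpow_inv_pow {n : ℕ} (hn : 0 < n) :
    ∫⁻ θ in Ioo (0:ℝ) 1, ENNReal.ofReal ((1 - θ ^ (n⁻¹ : ℝ)) ^ n) =
      ((2 * n).choose n : ℝ≥0∞)⁻¹ := by
  have hcont : Continuous fun θ : ℝ => (1 - θ ^ (n⁻¹ : ℝ)) ^ n := by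
    fun_prop (disch := positivity)
  rw [← ofReal_integral_eq_lintegral_ofReal (hcont.integrableOn_Icc.mono_set Ioo_subset_Icc_self),
    ← integral_Ioc_eq_integral_Ioo, ← intervalIntegral.integral_of_le zero_le_one,
    integral_one_sub_rpow_inv_pow hn,
    ENNReal.ofReal_inv_of_pos (Nat.cast_pos.mpr (Nat.choose_pos (by omega))),
    ENNReal.ofReal_natCast]
  filter_upwards [ae_restrict_mem measurableSet_Ioo] with θ hθ
  have : θ ^ (n⁻¹ : ℝ) ≤ 1 := Real.rpow_le_one hθ.1.le hθ.2.le (by positivity)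
  exact pow_nonneg (by linarith) n

theorem measure_le_ofReal_pow_mul_of_inv_smul_subset {E : Type*} [NormedAddCommGroup E]
    [NormedSpace ℝ E] [MeasurableSpace E] [BorelSpace E] [FiniteDimensional ℝ E] (μ : Measure E)
    [μ.IsAddHaarMeasure] {c : ℝ} (hc : 0 < c) {S T : Set E} (h : c⁻¹ • S ⊆ T) :
    μ S ≤ ENNReal.ofReal (c ^ Module.finrank ℝ E) * μ T := by
  rw [← Measure.addHaar_smul_of_nonneg μ hc.le, ← smul_inv_smul₀ hc.ne' S]
  exact measure_mono (smul_set_mono h)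

theorem prodMk_preimage_sub_prod {G : Type*} [AddCommGroup G] (x : G) (K L : Set G) :
    Prod.mk x ⁻¹' ((fun z : G × G => (z.1 - z.2, z.2)) ⁻¹' (L ×ˢ K)) =
      K ∩ (fun y => x - y) '' L := by
  rw [image_eq_preimage_of_inverse (sub_sub_cancel x) (sub_sub_cancel x), inter_comm]
  rfl

section Covariogram

variable {G : Type*} [MeasurableSpace G] [AddCommGroup G] [MeasurableAdd₂ G] [MeasurableNeg G]
  (μ : Measure G) [SFinite μ] {K L : Set G}

theorem measurableSet_preimage_sub_prod (hK : MeasurableSet K) (hL : MeasurableSet L) :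
    MeasurableSet ((fun z : G × G => (z.1 - z.2, z.2)) ⁻¹' (L ×ˢ K)) :=
  (hL.prod hK).preimage (by fun_prop)

theorem measurable_measure_inter_image_sub (hK : MeasurableSet K) (hL : MeasurableSet L) :
    Measurable fun x => μ (K ∩ (fun y => x - y) '' L) := by
  simpa only [prodMk_preimage_sub_prod] using
    measurable_measure_prodMk_left (ν := μ) (measurableSet_preimage_sub_prod hK hL)

theorem lintegral_measure_inter_image_sub [μ.IsAddRightInvariant]
    (hK : MeasurableSet K) (hL : MeasurableSet L) :
    ∫⁻ x, μ (K ∩ (fun y => x - y) '' L) ∂μ = μ K * μ L := by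
  have hS := measurableSet_preimage_sub_prod hK hL
  simp_rw [← prodMk_preimage_sub_prod, ← Measure.prod_apply hS,
    (measurePreserving_sub_prod μ μ).measure_preimage (hL.prod hK).nullMeasurableSet,
    Measure.prod_prod, mul_comm]

end Covariogram

theorem lintegral_eq_mul_setLIntegral_measure_lt {α : Type*} [MeasurableSpace α] (μ : Measure α)
    {g : α → ℝ≥0∞} (hg : AEMeasurable g μ) {M : ℝ≥0∞} (hMtop : M ≠ ⊤) (hgM : ∀ x, g x ≤ M) :
    ∫⁻ x, g x ∂μ = M * ∫⁻ θ in Ioo 0 1, μ {x | ENNReal.ofReal θ * M < g x} := by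
  rcases eq_or_ne M 0 with rfl | hM0
  · simp [nonpos_iff_eq_zero.mp (hgM _)]
  have hgM' : ∀ x, g x / M ≤ 1 := fun x =>
    (ENNReal.div_le_iff hM0 hMtop).mpr (by simpa using hgM x)
  have hne : ∀ x, g x / M ≠ ⊤ := fun x => ((hgM' x).trans_lt one_lt_top).ne
  have hlevel : ∀ θ > 0, {x | θ < (g x / M).toReal} = {x | ENNReal.ofReal θ * M < g x} :=
    fun θ hθ => by
      ext x
      rw [mem_ofPred_eq, mem_ofPred_eq, ← ENNReal.ofReal_lt_iff_lt_toReal hθ.le (hne x),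
        ENNReal.lt_div_iff_mul_lt (.inl hM0) (.inl hMtop)]
  have hempty : ∀ θ ≥ 1, {x | θ < (g x / M).toReal} = ∅ := fun θ hθ => by
    ext x
    simp only [mem_ofPred_eq, mem_empty_iff_false, iff_false, not_lt]
    exact (ENNReal.toReal_le_of_le_ofReal zero_le_one (by simpa using hgM' x)).trans hθ
  calc ∫⁻ x, g x ∂μ = M * ∫⁻ x, ENNReal.ofReal (g x / M).toReal ∂μ := by
        simp_rw [ENNReal.ofReal_toReal (hne _), ← lintegral_const_mul' _ _ hMtop,
          ENNReal.mul_div_cancel hM0 hMtop]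
    _ = M * ∫⁻ θ in Ioi 0, μ {x | θ < (g x / M).toReal} := by
        rw [lintegral_eq_lintegral_meas_lt μ (.of_forall fun _ => toReal_nonneg)
          (hg.div_const M).ennreal_toReal]
    _ = M * ∫⁻ θ in Ioo 0 1, μ {x | ENNReal.ofReal θ * M < g x} := by
        rw [← Ioo_union_Ici_eq_Ioi zero_lt_one, lintegral_union measurableSet_Ici
            ((Iio_disjoint_Ici le_rfl).mono_left Ioo_subset_Iio_self),
          setLIntegral_congr_fun measurableSet_Ici (fun θ hθ => by rw [hempty θ hθ]),
          setLIntegral_congr_fun measurableSet_Ioo (fun θ hθ => by rw [hlevel θ hθ.1])]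
        simp

theorem setOf_lt_subset_thetaConv {n : ℕ} (K L : Set (EuclideanSpace ℝ (Fin n))) (θ : ℝ) :
    {x | ENNReal.ofReal θ * volume (K ∩ -L) < volume (K ∩ (fun y => x - y) '' L)} ⊆
      thetaConv K L θ := by
  intro x hx
  obtain ⟨y, hyK, l, hl, rfl⟩ := nonempty_of_measure_ne_zero (pos_of_gt hx).ne'
  exact ⟨by simpa using add_mem_add hyK hl, hx.le⟩

theorem volume_thetaConv_le {n : ℕ} (hn : 0 < n) (K L : Set (EuclideanSpace ℝ (Fin n)))
    {θ : ℝ} (hθ : θ ∈ Ico 0 1) :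
    volume (thetaConv K L θ) ≤ ENNReal.ofReal ((1 - θ ^ (n⁻¹ : ℝ)) ^ n) *
      volume (closure (⋃ θ ∈ Ico (0:ℝ) 1, (1 - θ ^ ((n:ℝ)⁻¹))⁻¹ • thetaConv K L θ)) := by
  have hc : 0 < 1 - θ ^ (n⁻¹ : ℝ) := sub_pos.mpr (Real.rpow_lt_one hθ.1 hθ.2 (by positivity))
  simpa only [finrank_euclideanSpace_fin] using
    measure_le_ofReal_pow_mul_of_inv_smul_subset volume hc
      ((subset_biUnion_of_mem (u := fun θ : ℝ => (1 - θ ^ ((n:ℝ)⁻¹))⁻¹ • thetaConv K L θ)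
        hθ).trans subset_closure)

theorem volume_limiting_convolution_body_general {n : ℕ} (hn : 0 < n)
    (K L : Set (EuclideanSpace ℝ (Fin n)))
    (hKc : IsCompact K)
    (hLc : IsCompact L)
    (hM : ∀ z : EuclideanSpace ℝ (Fin n),
      volume (K ∩ ((fun y => z - y) '' L)) ≤ volume (K ∩ -L))
    (C : Set (EuclideanSpace ℝ (Fin n)))
    (hC : C = closure (⋃ θ ∈ Set.Ico (0:ℝ) 1,
      (1 - θ ^ ((n:ℝ)⁻¹))⁻¹ • thetaConv K L θ)) :
    ((2 * n).choose n : ℝ≥0∞) * (volume K * volume L) / volume (K ∩ -L) ≤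
      volume C := by
  set M := volume (K ∩ -L)
  have hMtop : M ≠ ⊤ := (measure_mono inter_subset_left).trans_lt hKc.measure_lt_top |>.ne
  have hlevel : ∀ θ ∈ Ioo (0:ℝ) 1,
      volume {x | ENNReal.ofReal θ * M < volume (K ∩ (fun y => x - y) '' L)} ≤
        ENNReal.ofReal ((1 - θ ^ (n⁻¹ : ℝ)) ^ n) * volume C := fun θ hθ => by
    rw [hC]
    exact (measure_mono (setOf_lt_subset_thetaConv K L θ)).trans
      (volume_thetaConv_le hn K L (Ioo_subset_Ico_self hθ))
  have hKL : volume K * volume L ≤ M * (((2 * n).choose n : ℝ≥0∞)⁻¹ * volume C) := by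
    rw [← lintegral_measure_inter_image_sub volume hKc.measurableSet hLc.measurableSet,
      lintegral_eq_mul_setLIntegral_measure_lt volume (measurable_measure_inter_image_sub
        volume hKc.measurableSet hLc.measurableSet).aemeasurable hMtop hM,
      ← lintegral_ofReal_one_sub_rpow_inv_pow hn,
      ← lintegral_mul_const _ (by fun_prop (disch := positivity))]
    gcongr M * ?_
    exact setLIntegral_mono (by fun_prop (disch := positivity)) hlevel
  refine ENNReal.div_le_of_le_mul ?_
  calc ((2 * n).choose n : ℝ≥0∞) * (volume K * volume L)
      ≤ (2 * n).choose n * (M * (((2 * n).choose n : ℝ≥0∞)⁻¹ * volume C)) := by gcongr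
    _ = M * ((2 * n).choose n * ((2 * n).choose n : ℝ≥0∞)⁻¹) * volume C := by ring
    _ = volume C * M := by
      rw [ENNReal.mul_inv_cancel (by exact_mod_cast (Nat.choose_pos (by omega)).ne')
        (natCast_ne_top _), mul_one, mul_comm]

theorem volume_limiting_convolution_body {n : ℕ} (hn : 0 < n)
    (K L : Set (EuclideanSpace ℝ (Fin n)))
    (hK : Convex ℝ K) (hKc : IsCompact K) (hKi : (interior K).Nonempty)
    (hL : Convex ℝ L) (hLc : IsCompact L) (hLi : (interior L).Nonempty)
    (hM : ∀ z : EuclideanSpace ℝ (Fin n),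
      volume (K ∩ ((fun y => z - y) '' L)) ≤ volume (K ∩ -L))
    (C : Set (EuclideanSpace ℝ (Fin n)))
    (hC : C = closure (⋃ θ ∈ Set.Ico (0:ℝ) 1,
      (1 - θ ^ ((n:ℝ)⁻¹))⁻¹ • thetaConv K L θ)) :
    ((2 * n).choose n : ℝ≥0∞) * (volume K * volume L) / volume (K ∩ -L) ≤
      volume C :=
  volume_limiting_convolution_body_general hn K L hKc hLc hM C hC
end
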